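/- For every integer r ≥ 1 there exists ε > 0 such that for all z ∈ ℂ with |z| < ε and 1−rz^r ≠ 0, writing x = z·exp(−z^r): (i) for every integer k with 1 ≤ k ≤ r−1, the series Σ_{m=0}^∞ ((rm+k)^m/m!)·x^{rm+k} converges absolutely and equals z^k/(1−rz^r); (ii) the series Σ_{m=1}^∞ ((rm)^m/m!)·x^{rm} converges absolutely and equals r z^r/(1−rz^r). -/

import Mathlib

/-!
Since `x ^ (rm+k) = z ^ (rm+k) exp (-(rm+k) z ^ r)`, expanding the exponential turns the series
into the double series `∑_{m,j} (rm+k)^m/m! · z^(rm+k) · (-(rm+k) z^r)^j/j!`, which converges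
absolutely for small `z` because `y^n/n! ≤ e^(cy)/c^n`. Grouped along `m + j = n` it becomes
`∑_n z^(rn+k)/n! · ∑_m (-1)^(n-m) C(n,m) (rm+k)^n`, and the inner sum is the `n`-th forward
difference of the degree-`n` polynomial `(ry+k)^n`, namely `n! r^n`. What remains is the geometric
series `∑_n z^k (r z^r)^n = z^k/(1 - r z^r)`; part (ii) is the case `k = 0` without its leading
term `1`.
-/

open Finset Nat fwdDiff Topology

section ForwardDifference

variable {R : Type*} [CommRing R]

theorem fwdDiff_iter_affine_pow (a b : R) (n : ℕ) :
    Δ_[1] ^[n] (fun y : R ↦ (a * y + b) ^ n) = fun _ ↦ (n ! : R) * a ^ n := by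
  have hexpand : (fun y : R ↦ (a * y + b) ^ n) = a ^ n • (fun y : R ↦ y ^ n) +
      fun y ↦ ∑ i ∈ range n, (n.choose i * a ^ i * b ^ (n - i) : R) * y ^ i := by
    ext y
    rw [add_pow, sum_range_succ]
    simp only [Pi.add_apply, Pi.smul_apply, smul_eq_mul, Nat.choose_self, Nat.sub_self]
    rw [add_comm]
    congr 1
    · simp [mul_pow]
    · exact sum_congr rfl fun i _ ↦ by rw [mul_pow]; ring
  rw [hexpand, fwdDiff_iter_add, fwdDiff_iter_const_smul, fwdDiff_iter_eq_factorial,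
    fwdDiff_iter_sum_mul_pow_eq_zero]
  ext
  simp [mul_comm]

theorem sum_range_alternating_choose_mul_affine_pow (a b : R) (n : ℕ) :
    ∑ m ∈ range (n + 1), (-1) ^ (n - m) * (n.choose m : R) * (a * m + b) ^ n = n ! * a ^ n := by
  have h := fwdDiff_iter_eq_sum_shift 1 (fun y : R ↦ (a * y + b) ^ n) n 0
  rw [fwdDiff_iter_affine_pow] at h
  simpa [zsmul_eq_mul] using h.symm

end ForwardDifference

theorem HasSum.sum_antidiagonal {α A : Type*} [AddCommMonoid α] [TopologicalSpace α]
    [ContinuousAdd α] [RegularSpace α] [AddMonoid A] [HasAntidiagonal A] {f : A × A → α} {a : α}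
    (hf : HasSum f a) : HasSum (fun n ↦ ∑ p ∈ antidiagonal n, f p) a :=
  (HasAntidiagonal.sigmaAntidiagonalEquivProd.hasSum_iff.2 hf).sigma fun n ↦ by
    have h := hasSum_fintype fun p : antidiagonal n ↦ f p
    rwa [sum_coe_sort] at h

theorem Real.pow_div_factorial_le_exp_mul_div_pow {x c : ℝ} (hx : 0 ≤ x) (hc : 0 < c) (n : ℕ) :
    x ^ n / n ! ≤ Real.exp (c * x) / c ^ n := by
  have h := Real.pow_div_factorial_le_exp (c * x) (by positivity) n
  rw [mul_pow, mul_div_assoc] at h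
  rwa [le_div_iff₀' (by positivity)]

section Lambert

variable (r k : ℕ) (z : ℂ)

noncomputable def lambertTerm (m : ℕ) : ℂ :=
  ((r * m + k : ℕ) : ℂ) ^ m / (m ! : ℂ) * (z * Complex.exp (-z ^ r)) ^ (r * m + k)

noncomputable def lambertDoubleTerm (p : ℕ × ℕ) : ℂ :=
  ((r * p.1 + k : ℕ) : ℂ) ^ p.1 / (p.1 ! : ℂ) * z ^ (r * p.1 + k) *
    ((-((r * p.1 + k : ℕ) : ℂ) * z ^ r) ^ p.2 / (p.2 ! : ℂ))

theorem hasSum_lambertDoubleTerm_fiber (m : ℕ) :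
    HasSum (fun j ↦ lambertDoubleTerm r k z (m, j)) (lambertTerm r k z m) := by
  have h : HasSum (fun j ↦ lambertDoubleTerm r k z (m, j))
      (((r * m + k : ℕ) : ℂ) ^ m / (m ! : ℂ) * z ^ (r * m + k) *
        NormedSpace.exp (-((r * m + k : ℕ) : ℂ) * z ^ r)) :=
    (NormedSpace.expSeries_div_hasSum_exp (-((r * m + k : ℕ) : ℂ) * z ^ r)).mul_left
      (((r * m + k : ℕ) : ℂ) ^ m / (m ! : ℂ) * z ^ (r * m + k))
  convert h using 1
  rw [lambertTerm, ← Complex.exp_eq_exp_ℂ, mul_pow, neg_mul, ← mul_neg, Complex.exp_nat_mul]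
  ring

theorem lambertDoubleTerm_eq_of_mem_antidiagonal {n : ℕ} {p : ℕ × ℕ} (hp : p ∈ antidiagonal n) :
    lambertDoubleTerm r k z p = z ^ (r * n + k) / (n ! : ℂ) *
      ((-1) ^ p.2 * (n.choose p.1 : ℂ) * ((r : ℂ) * p.1 + k) ^ n) := by
  obtain ⟨m, j⟩ := p
  rw [HasAntidiagonal.mem_antidiagonal] at hp
  subst hp
  have hfact : ((m + j).choose m : ℂ) * m ! * j ! = (m + j)! := by
    rw [Nat.choose_symm_add]
    exact_mod_cast Nat.add_choose_mul_factorial_mul_factorial m j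
  have hchoose : ((m + j).choose m : ℂ) ≠ 0 :=
    Nat.cast_ne_zero.2 (Nat.choose_pos (Nat.le_add_right m j)).ne'
  rw [lambertDoubleTerm, ← hfact, neg_mul, neg_pow, mul_pow, ← pow_mul]
  push_cast
  field_simp
  ring

theorem sum_antidiagonal_lambertDoubleTerm (n : ℕ) :
    ∑ p ∈ antidiagonal n, lambertDoubleTerm r k z p = z ^ k * ((r : ℂ) * z ^ r) ^ n := by
  rw [sum_congr rfl fun p hp ↦ lambertDoubleTerm_eq_of_mem_antidiagonal r k z hp, ← mul_sum,
    Nat.sum_antidiagonal_eq_sum_range_succ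
      (fun m j ↦ (-1 : ℂ) ^ j * (n.choose m : ℂ) * ((r : ℂ) * m + k) ^ n),
    sum_range_alternating_choose_mul_affine_pow]
  have : (n ! : ℂ) ≠ 0 := Nat.cast_ne_zero.2 n.factorial_ne_zero
  field_simp
  ring

theorem norm_lambertDoubleTerm (p : ℕ × ℕ) :
    ‖lambertDoubleTerm r k z p‖ = ‖z‖ ^ k *
      ((((r * p.1 + k : ℕ) : ℝ) * ‖z‖ ^ r) ^ p.1 / p.1 !) *
      ((((r * p.1 + k : ℕ) : ℝ) * ‖z‖ ^ r) ^ p.2 / p.2 !) := by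
  simp only [lambertDoubleTerm, norm_mul, norm_div, norm_pow, norm_neg, Complex.norm_natCast]
  rw [pow_add, pow_mul, mul_pow]
  ring

-- `c = 3` for the `m`-factor and `c = 2` for the `j`-factor; then the ratio in `m` is below `e / 3`
-- as soon as `5 r ‖z‖ ^ r ≤ 1`.
theorem norm_lambertDoubleTerm_le (p : ℕ × ℕ) :
    ‖lambertDoubleTerm r k z p‖ ≤ ‖z‖ ^ k * Real.exp (5 * (k * ‖z‖ ^ r)) *
      ((Real.exp (5 * (r * ‖z‖ ^ r)) / 3) ^ p.1 * (1 / 2) ^ p.2) := by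
  obtain ⟨m, j⟩ := p
  set x := ((r * m + k : ℕ) : ℝ) * ‖z‖ ^ r
  have hx : 0 ≤ x := by positivity
  have hexp : Real.exp (3 * x) * Real.exp (2 * x) =
      Real.exp (5 * (k * ‖z‖ ^ r)) * Real.exp (5 * (r * ‖z‖ ^ r)) ^ m := by
    rw [← Real.exp_add, ← Real.exp_nat_mul, ← Real.exp_add]
    push_cast [x]
    ring_nf
  calc ‖lambertDoubleTerm r k z (m, j)‖ = ‖z‖ ^ k * (x ^ m / m !) * (x ^ j / j !) :=
        norm_lambertDoubleTerm r k z (m, j)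
    _ ≤ ‖z‖ ^ k * (Real.exp (3 * x) / 3 ^ m) * (Real.exp (2 * x) / 2 ^ j) := by
        gcongr ‖z‖ ^ k * ?_ * ?_
        · exact Real.pow_div_factorial_le_exp_mul_div_pow hx three_pos m
        · exact Real.pow_div_factorial_le_exp_mul_div_pow hx two_pos j
    _ = ‖z‖ ^ k * (Real.exp (3 * x) * Real.exp (2 * x)) / (3 ^ m * 2 ^ j) := by ring
    _ = _ := by
        rw [hexp, div_pow, one_div_pow]
        field_simp

theorem summable_norm_lambertDoubleTerm (h : 5 * (r * ‖z‖ ^ r) ≤ 1) :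
    Summable fun p ↦ ‖lambertDoubleTerm r k z p‖ := by
  have hratio : Real.exp (5 * (r * ‖z‖ ^ r)) / 3 < 1 := by
    rw [div_lt_one (by norm_num)]
    calc Real.exp (5 * (r * ‖z‖ ^ r)) ≤ Real.exp 1 := Real.exp_le_exp.2 h
      _ < 3 := Real.exp_one_lt_d9.trans (by norm_num)
  refine .of_nonneg_of_le (fun _ ↦ norm_nonneg _) (norm_lambertDoubleTerm_le r k z) ?_
  exact ((summable_geometric_of_lt_one (by positivity) hratio).mul_of_nonneg
    summable_geometric_two (fun _ ↦ by positivity) (fun _ ↦ by positivity)).mul_left _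

theorem summable_norm_lambertTerm (h : 5 * (r * ‖z‖ ^ r) ≤ 1) :
    Summable fun m ↦ ‖lambertTerm r k z m‖ := by
  have hF := summable_norm_lambertDoubleTerm r k z h
  refine .of_nonneg_of_le (fun _ ↦ norm_nonneg _) (fun m ↦ ?_) hF.prod
  rw [← (hasSum_lambertDoubleTerm_fiber r k z m).tsum_eq]
  exact norm_tsum_le_tsum_norm (hF.prod_factor m)

theorem norm_natCast_mul_pow_lt_one (h : 5 * (r * ‖z‖ ^ r) ≤ 1) : ‖(r : ℂ) * z ^ r‖ < 1 := by
  rw [norm_mul, Complex.norm_natCast, norm_pow]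
  linarith [mul_nonneg r.cast_nonneg (pow_nonneg (norm_nonneg z) r)]

theorem hasSum_lambertTerm (h : 5 * (r * ‖z‖ ^ r) ≤ 1) :
    HasSum (lambertTerm r k z) (z ^ k / (1 - r * z ^ r)) := by
  have hF := (summable_norm_lambertDoubleTerm r k z h).of_norm.hasSum
  have hdiag := hF.sum_antidiagonal
  simp_rw [sum_antidiagonal_lambertDoubleTerm] at hdiag
  rw [div_eq_mul_inv, ← hdiag.unique ((hasSum_geometric_of_norm_lt_one
    (norm_natCast_mul_pow_lt_one r z h)).mul_left (z ^ k))]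
  exact hF.prod_fiberwise (hasSum_lambertDoubleTerm_fiber r k z)

theorem hasSum_lambertTerm_zero_succ (h : 5 * (r * ‖z‖ ^ r) ≤ 1) :
    HasSum (fun m ↦ lambertTerm r 0 z (m + 1)) (r * z ^ r / (1 - r * z ^ r)) := by
  have hne : 1 - (r : ℂ) * z ^ r ≠ 0 := fun h0 ↦ by
    have hlt := norm_natCast_mul_pow_lt_one r z h
    rw [← sub_eq_zero.1 h0, norm_one] at hlt
    exact hlt.false
  have hshift := (hasSum_nat_add_iff' 1).2 (hasSum_lambertTerm r 0 z h)
  have hvalue : z ^ 0 / (1 - r * z ^ r) - ∑ i ∈ range 1, lambertTerm r 0 z i =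
      r * z ^ r / (1 - r * z ^ r) := by
    simp only [lambertTerm, sum_range_one]
    field_simp
    ring
  rwa [hvalue] at hshift

end Lambert

theorem eventually_five_mul_natCast_mul_norm_pow_le_one (r : ℕ) :
    ∀ᶠ z : ℂ in 𝓝 0, 5 * (r * ‖z‖ ^ r) ≤ 1 := by
  have hcont : Continuous fun z : ℂ ↦ 5 * (r * ‖z‖ ^ r) := by fun_prop
  refine (hcont.tendsto 0).eventually (eventually_le_nhds ?_)
  cases r <;> simp

theorem stmt13_general (r : ℕ) :
    ∃ ε > (0 : ℝ), ∀ z : ℂ, ‖z‖ < ε → 1 - (r : ℂ) * z ^ r ≠ 0 →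
      (∀ k : ℕ, 1 ≤ k → k ≤ r - 1 →
        (Summable fun m : ℕ =>
          ‖((r * m + k : ℕ) : ℂ) ^ m / (Nat.factorial m : ℂ) *
            (z * Complex.exp (-z ^ r)) ^ (r * m + k)‖) ∧
        HasSum (fun m : ℕ =>
          ((r * m + k : ℕ) : ℂ) ^ m / (Nat.factorial m : ℂ) *
            (z * Complex.exp (-z ^ r)) ^ (r * m + k))
          (z ^ k / (1 - (r : ℂ) * z ^ r))) ∧
      (Summable fun m : ℕ =>
        ‖((r * (m + 1) : ℕ) : ℂ) ^ (m + 1) / (Nat.factorial (m + 1) : ℂ) *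
          (z * Complex.exp (-z ^ r)) ^ (r * (m + 1))‖) ∧
      HasSum (fun m : ℕ =>
        ((r * (m + 1) : ℕ) : ℂ) ^ (m + 1) / (Nat.factorial (m + 1) : ℂ) *
          (z * Complex.exp (-z ^ r)) ^ (r * (m + 1)))
        ((r : ℂ) * z ^ r / (1 - (r : ℂ) * z ^ r)) := by
  obtain ⟨ε, hε, hsmall⟩ :=
    Metric.eventually_nhds_iff.1 (eventually_five_mul_natCast_mul_norm_pow_le_one r)
  refine ⟨ε, hε, fun z hz _ ↦ ?_⟩
  have h : 5 * (r * ‖z‖ ^ r) ≤ 1 := hsmall (by simpa using hz)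
  exact ⟨fun k _ _ ↦ ⟨summable_norm_lambertTerm r k z h, hasSum_lambertTerm r k z h⟩,
    (summable_nat_add_iff 1).2 (summable_norm_lambertTerm r 0 z h),
    hasSum_lambertTerm_zero_succ r z h⟩

/-- for every r ≥ 1 there is ε > 0 such that for ‖z‖ < ε with 1−rz^r ≠ 0,
writing x = z·exp(−z^r): (i) for 1 ≤ k ≤ r−1 the series Σ_{m≥0} ((rm+k)^m/m!)·x^{rm+k}
converges absolutely to z^k/(1−rz^r); (ii) Σ_{m≥1} ((rm)^m/m!)·x^{rm} converges
absolutely to rz^r/(1−rz^r). -/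
theorem stmt13 (r : ℕ) (hr : 1 ≤ r) :
    ∃ ε > (0 : ℝ), ∀ z : ℂ, ‖z‖ < ε → 1 - (r : ℂ) * z ^ r ≠ 0 →
      (∀ k : ℕ, 1 ≤ k → k ≤ r - 1 →
        (Summable fun m : ℕ =>
          ‖((r * m + k : ℕ) : ℂ) ^ m / (Nat.factorial m : ℂ) *
            (z * Complex.exp (-z ^ r)) ^ (r * m + k)‖) ∧
        HasSum (fun m : ℕ =>
          ((r * m + k : ℕ) : ℂ) ^ m / (Nat.factorial m : ℂ) *
            (z * Complex.exp (-z ^ r)) ^ (r * m + k))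
          (z ^ k / (1 - (r : ℂ) * z ^ r))) ∧
      (Summable fun m : ℕ =>
        ‖((r * (m + 1) : ℕ) : ℂ) ^ (m + 1) / (Nat.factorial (m + 1) : ℂ) *
          (z * Complex.exp (-z ^ r)) ^ (r * (m + 1))‖) ∧
      HasSum (fun m : ℕ =>
        ((r * (m + 1) : ℕ) : ℂ) ^ (m + 1) / (Nat.factorial (m + 1) : ℂ) *
          (z * Complex.exp (-z ^ r)) ^ (r * (m + 1)))
        ((r : ℂ) * z ^ r / (1 - (r : ℂ) * z ^ r)) :=
  stmt13_general r
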